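/- arXiv:2202.04714 — 2 statements merged into one kernel-verified Lean document; each statement's English description precedes it below -/
import Mathlib

section
/- If u, v ∈ M_n(ℂ) are unitaries satisfying the trace-orthogonality Tr(u^* v) = 0, then the projections P(u) = ∑_{i,j} E_{i,j} ⊗ (1/n) u^* E_{i,j} u and P(v) = ∑_{i,j} E_{i,j} ⊗ (1/n) v^* E_{i,j} v in M_n(ℂ) ⊗ M_n(ℂ) are mutually orthogonal: P(u)·P(v) = 0. -/
/-! `P(u)` is the rank-one matrix `(1/n) |vec ū⟩⟨vec u|`, so `P(u) P(v)` is a multiple of the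
inner product of the vectorizations of `u` and `v`, which is `conj (Tr (u^* v)) = 0`. -/

open Matrix Kronecker

noncomputable def Pproj (n : ℕ) (u : Matrix (Fin n) (Fin n) ℂ) :
    Matrix (Fin n × Fin n) (Fin n × Fin n) ℂ :=
  ∑ i : Fin n, ∑ j : Fin n,
    (Matrix.single i j (1 : ℂ)) ⊗ₖ
      ((1 / (n : ℂ)) • (star u * Matrix.single i j (1 : ℂ) * u))

namespace Matrix

variable {α : Type*} {l l' m n : Type*}

theorem sum_single_kronecker_mul_single_mul [Semiring α] [Fintype l] [Fintype l']
    [DecidableEq l] [DecidableEq l'] (A : Matrix m l α) (B : Matrix l' n α) :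
    ∑ i, ∑ j, single i j (1 : α) ⊗ₖ (A * single i j (1 : α) * B) =
      vecMulVec (vec A) (vec Bᵀ) := by
  have entry (i j a b) : (A * single i j (1 : α) * B) a b = A a i * B j b := by
    simp [mul_apply, single_apply, ite_and]
  ext ⟨i, a⟩ ⟨j, b⟩
  simp [Matrix.sum_apply, single_apply, vecMulVec_apply, entry, ite_and]

theorem vec_transpose_dotProduct_vec_conjTranspose [CommSemiring α] [StarRing α] [Fintype m]
    [Fintype n] (u v : Matrix m n α) :
    vec uᵀ ⬝ᵥ vec vᴴ = star (uᴴ * v).trace := by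
  rw [vec_dotProduct_vec, transpose_transpose, trace_mul_comm, ← trace_conjTranspose,
    conjTranspose_mul, conjTranspose_conjTranspose]

end Matrix

theorem Pproj_eq_smul_vecMulVec (n : ℕ) (u : Matrix (Fin n) (Fin n) ℂ) :
    Pproj n u = (1 / (n : ℂ)) • vecMulVec (vec uᴴ) (vec uᵀ) := by
  simp only [Pproj, kronecker_smul, ← Finset.smul_sum, star_eq_conjTranspose,
    sum_single_kronecker_mul_single_mul]

theorem Pproj_orthogonal_general (n : ℕ) (u v : Matrix (Fin n) (Fin n) ℂ)
    (horth : Matrix.trace (star u * v) = 0) :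
    Pproj n u * Pproj n v = 0 := by
  have hdot : vec uᵀ ⬝ᵥ vec vᴴ = 0 := by
    rw [vec_transpose_dotProduct_vec_conjTranspose, ← star_eq_conjTranspose, horth, star_zero]
  rw [Pproj_eq_smul_vecMulVec, Pproj_eq_smul_vecMulVec, smul_mul_smul_comm,
    vecMulVec_mul_vecMulVec, hdot, zero_smul, vecMulVec_zero, smul_zero]

/-- If `u, v` are unitaries with `Tr(u^* v) = 0`, then `P(u)·P(v) = 0`. -/
theorem Pproj_orthogonal (n : ℕ) [NeZero n] (u v : Matrix (Fin n) (Fin n) ℂ)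
    (hu : u ∈ Matrix.unitaryGroup (Fin n) ℂ)
    (hv : v ∈ Matrix.unitaryGroup (Fin n) ℂ)
    (horth : Matrix.trace (star u * v) = 0) :
    Pproj n u * Pproj n v = 0 :=
  Pproj_orthogonal_general n u v horth
end

section
/- Let H be a subgroup of finite index in a free group G of finite rank r(G). Then H is free and its rank satisfies r(H) − 1 = [G : H]·(r(G) − 1) (the Nielsen–Schreier index formula). -/
/-!
`H` is the vertex group, at the coset `H`, of the action groupoid of `G` on `G ⧸ H`. That
groupoid is free on the quiver with one arrow `x ⟶ s • x` per coset `x` and free generator `s`: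
`n = [G : H]` vertices and `n · r(G)` arrows. For a spanning tree of this quiver, the vertex
group is free on the loops through the arrows off the tree, and a tree on `n` vertices has
`n - 1` edges, so `r(H) = n · r(G) - (n - 1)`.
-/

open Quiver CategoryTheory

universe u

namespace Quiver.Arborescence

variable {V : Type*} [Quiver V] [Arborescence V]

lemma default_eq_cons {a b : V} (e : a ⟶ b) :
    (default : Path (Quiver.root V) b) = (default : Path (Quiver.root V) a).cons e :=
  Subsingleton.elim _ _

lemma length_default_of_hom {a b : V} (e : a ⟶ b) :
    (default : Path (Quiver.root V) b).length = (default : Path (Quiver.root V) a).length + 1 := by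
  rw [default_eq_cons e, Path.length_cons]

lemma isEmpty_hom_root (a : V) : IsEmpty (a ⟶ Quiver.root V) :=
  ⟨fun e => Path.nil_ne_cons default e (Subsingleton.elim _ _)⟩

lemma isEmpty_hom_of_hom {a b : V} (e : a ⟶ b) : IsEmpty (b ⟶ a) :=
  ⟨fun f => by
    have := length_default_of_hom e
    have := length_default_of_hom f
    omega⟩

lemma total_eq_of_right_eq {x y : Total V} (h : x.right = y.right) : x = y := by
  obtain ⟨a, b, e⟩ := x
  obtain ⟨a', b', e'⟩ := y
  dsimp only at h
  subst h
  have hp := (default_eq_cons e).symm.trans (default_eq_cons e')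
  obtain rfl := Path.obj_eq_of_cons_eq_cons hp
  obtain rfl := eq_of_heq (Path.hom_heq_of_cons_eq_cons hp)
  rfl

lemma exists_hom_of_ne_root {b : V} (hb : b ≠ Quiver.root V) : ∃ a, Nonempty (a ⟶ b) := by
  obtain ⟨a, -, e, -⟩ := (default : Path (Quiver.root V) b).length_ne_zero_iff_eq_cons.1
    fun h => hb (Path.eq_of_length_zero _ h).symm
  exact ⟨a, ⟨e⟩⟩

/-- Every vertex but the root is the target of exactly one arrow. -/
noncomputable def totalEquivNeRoot : Total V ≃ {b : V // b ≠ Quiver.root V} :=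
  Equiv.ofBijective (fun x => ⟨x.right, fun h => (isEmpty_hom_root x.left).false (h ▸ x.hom)⟩)
    ⟨fun _ _ h => total_eq_of_right_eq (congrArg Subtype.val h), fun ⟨b, hb⟩ =>
      let ⟨a, ⟨e⟩⟩ := exists_hom_of_ne_root hb; ⟨⟨a, b, e⟩, rfl⟩⟩

lemma card_total_add_one [Finite V] : Nat.card (Total V) + 1 = Nat.card V := by
  have := Fintype.ofFinite V
  classical
  rw [Nat.card_congr totalEquivNeRoot, Nat.card_eq_fintype_card, Nat.card_eq_fintype_card,
    Fintype.card_subtype_compl, Fintype.card_subtype_eq]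
  have := Fintype.card_pos_iff.2 ⟨Quiver.root V⟩
  omega

end Quiver.Arborescence

namespace Quiver.WideSubquiver

variable {V : Type*} [Quiver V] (T : WideSubquiver (Symmetrify V))

def underlyingArrows : Set (Total V) :=
  wideSubquiverEquivSetTotal (wideSubquiverSymmetrify T)

def totalUnderlying : Total T → Total V
  | ⟨a, b, ⟨Sum.inl g, _⟩⟩ => ⟨a, b, g⟩
  | ⟨a, b, ⟨Sum.inr g, _⟩⟩ => ⟨b, a, g⟩

lemma totalUnderlying_mem (x : Total T) : T.totalUnderlying x ∈ T.underlyingArrows := by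
  obtain ⟨a, b, ⟨g | g, h⟩⟩ := x
  exacts [Or.inl h, Or.inr h]

lemma exists_totalUnderlying_eq {y : Total V} (hy : y ∈ T.underlyingArrows) :
    ∃ x, T.totalUnderlying x = y := by
  obtain ⟨a, b, g⟩ := y
  rcases hy with h | h
  exacts [⟨⟨a, b, ⟨Sum.inl g, h⟩⟩, rfl⟩, ⟨⟨b, a, ⟨Sum.inr g, h⟩⟩, rfl⟩]

lemma totalUnderlying_injective [Arborescence T] : Function.Injective T.totalUnderlying := by
  rintro ⟨a, b, ⟨g | g, hg⟩⟩ ⟨a', b', ⟨g' | g', hg'⟩⟩ h <;>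
    obtain ⟨rfl, rfl, h⟩ := Total.mk.inj h <;> obtain rfl := eq_of_heq h
  · rfl
  · exact (Arborescence.isEmpty_hom_of_hom (show a ⟶ b from ⟨_, hg⟩)).elim ⟨_, hg'⟩
  · exact (Arborescence.isEmpty_hom_of_hom (show a ⟶ b from ⟨_, hg⟩)).elim ⟨_, hg'⟩
  · rfl

noncomputable def totalEquivUnderlyingArrows [Arborescence T] : Total T ≃ T.underlyingArrows :=
  Equiv.ofBijective (fun x => ⟨T.totalUnderlying x, T.totalUnderlying_mem x⟩)
    ⟨fun _ _ h => T.totalUnderlying_injective (congrArg Subtype.val h), fun ⟨_, hy⟩ =>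
      let ⟨x, hx⟩ := T.exists_totalUnderlying_eq hy; ⟨x, Subtype.ext hx⟩⟩

lemma card_compl_underlyingArrows_add_card [Arborescence T] [Finite V] [Finite (Total V)] :
    Nat.card ↥(T.underlyingArrows)ᶜ + Nat.card V = Nat.card (Total V) + 1 := by
  classical
  have : Finite T := ‹Finite V›
  have htree : Nat.card T.underlyingArrows + 1 = Nat.card V := by
    rw [← Nat.card_congr T.totalEquivUnderlyingArrows]
    exact Arborescence.card_total_add_one (V := T)
  have hsplit :
      Nat.card T.underlyingArrows + Nat.card ↥(T.underlyingArrows)ᶜ = Nat.card (Total V) :=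
    (Nat.card_sum).symm.trans (Nat.card_congr (Equiv.Set.sumCompl _))
  omega

end Quiver.WideSubquiver

namespace IsFreeGroupoid.SpanningTree

variable {G : Type u} [Groupoid.{u} G] [IsFreeGroupoid G]
  {T : WideSubquiver (Symmetrify (Generators G))} [Arborescence T]

variable (T) in
/-- Public copy of Mathlib's private `IsFreeGroupoid.SpanningTree.root'`. -/
abbrev rootObj : G :=
  show T from Quiver.root T

lemma treeHom_rootObj : treeHom T (rootObj T) = 𝟙 (rootObj T) :=
  treeHom_root T

section

variable {X : Type u} [Group X] {F : G ⥤ CategoryTheory.SingleObj X}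
  (hF : ∀ (a b : Generators G) (e : a ⟶ b),
    e ∈ wideSubquiverSymmetrify T a b → F.map (of e) = 1)
include hF

lemma map_homOfPath_eq_one {a : G} (p : Path (Quiver.root T) a) : F.map (homOfPath T p) = 1 := by
  induction p with
  | nil => exact F.map_id _
  | cons p e ih =>
    erw [homOfPath.eq_2, F.map_comp, SingleObj.comp_as_mul, ih, mul_one]
    rcases e with ⟨e | e, he⟩
    · exact hF _ _ e (Or.inl he)
    · rw [F.map_inv, SingleObj.inv_as_inv, inv_eq_one]
      exact hF _ _ e (Or.inr he)

lemma map_loopOfHom {a b : G} (q : a ⟶ b) : F.map (loopOfHom T q) = F.map q := by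
  simp only [loopOfHom, treeHom, Functor.map_comp, Functor.map_inv, SingleObj.comp_as_mul,
    SingleObj.inv_as_inv]
  rw [map_homOfPath_eq_one hF, map_homOfPath_eq_one hF, inv_one, one_mul, mul_one]

end

lemma loopOfHom_of_end (x : End (rootObj T)) : loopOfHom T x = x := by
  simp only [loopOfHom, treeHom_rootObj]
  erw [IsIso.inv_id, Category.id_comp, Category.comp_id]

variable (T) in
/-- The basis behind Mathlib's `endIsFree`, which records only that some basis exists. -/
noncomputable def endBasis : FreeGroupBasis ↥(T.underlyingArrows)ᶜ (End (rootObj T)) :=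
  FreeGroupBasis.ofUniqueLift _ (fun e => loopOfHom T (of e.1.hom)) fun {X} _ f => by
    classical
    obtain ⟨F, hF, hF_unique⟩ := unique_lift fun a b (e : a ⟶ b) =>
      if h : (⟨a, b, e⟩ : Quiver.Total _) ∈ T.underlyingArrows then 1
      else f ⟨⟨a, b, e⟩, h⟩
    have hF_tree :
        ∀ a b (e : a ⟶ b), e ∈ wideSubquiverSymmetrify T a b → F.map (of e) = 1 :=
      fun a b e h => (hF a b e).trans (dif_pos h)
    refine ⟨F.mapEnd _, fun e => ?_, fun E hE => ?_⟩
    · erw [Functor.mapEnd_apply, map_loopOfHom hF_tree, hF]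
      exact dif_neg e.2
    · have hE_functor : functorOfMonoidHom T E = F := by
        refine hF_unique _ fun a b e => ?_
        change E (loopOfHom T (of e)) = _
        split_ifs with h
        · rw [loopOfHom_eq_id T e h]
          exact E.map_one
        · exact hE ⟨⟨a, b, e⟩, h⟩
      ext x
      exact (congrArg E (loopOfHom_of_end x)).symm.trans
        (congrArg (fun F : G ⥤ CategoryTheory.SingleObj X => F.map x) hE_functor)

end IsFreeGroupoid.SpanningTree

namespace CategoryTheory.ActionCategory

variable (G : Type u) [Group G] (A : Type u) [MulAction G A]

lemma card_generators : Nat.card (IsFreeGroupoid.Generators (ActionCategory G A)) = Nat.card A :=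
  Nat.card_congr (objEquiv G A).symm

variable [IsFreeGroup G]

noncomputable def totalGeneratorsEquiv :
    Total (IsFreeGroupoid.Generators (ActionCategory G A)) ≃ A × IsFreeGroup.Generators G where
  toFun x := ⟨ActionCategory.back (show ActionCategory G A from x.left), x.hom.val⟩
  invFun p := ⟨(objEquiv G A p.1 : ActionCategory G A),
    (objEquiv G A (IsFreeGroup.of p.2 • p.1) : ActionCategory G A), ⟨p.2, rfl⟩⟩
  left_inv := by
    rintro ⟨⟨⟨⟩, (a : A)⟩, ⟨⟨⟩, (b : A)⟩, e, he⟩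
    obtain rfl : IsFreeGroup.of e • a = b := he
    rfl
  right_inv _ := rfl

lemma card_total_generators :
    Nat.card (Total (IsFreeGroupoid.Generators (ActionCategory G A))) =
      Nat.card A * Nat.card (IsFreeGroup.Generators G) := by
  rw [Nat.card_congr (totalGeneratorsEquiv G A), Nat.card_prod]

end CategoryTheory.ActionCategory

open IsFreeGroupoid IsFreeGroupoid.SpanningTree ActionCategory in
/-- Nielsen–Schreier with the index formula: a finite index subgroup `H` of a free
group `G` of finite rank is free, with `r(H) - 1 = [G : H]·(r(G) - 1)`. -/
theorem nielsen_schreier_index_formula (G : Type) [Group G] [IsFreeGroup G]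
    [Fintype (IsFreeGroup.Generators G)] (H : Subgroup G) (hH : H.FiniteIndex) :
    ∃ (ι : Type) (_ : Fintype ι) (_ : FreeGroupBasis ι H),
      (Nat.card ι : ℤ) - 1 =
        (H.index : ℤ) * ((Nat.card (IsFreeGroup.Generators G) : ℤ) - 1) := by
  have : Finite (G ⧸ H) := Nat.finite_of_card_ne_zero hH.index_ne_zero
  let Γ := ActionCategory G (G ⧸ H)
  have : Finite (Generators Γ) := Finite.of_equiv _ (objEquiv G (G ⧸ H))
  have : Finite (Total (Generators Γ)) := Finite.of_equiv _ (totalGeneratorsEquiv G (G ⧸ H)).symm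
  let base : Symmetrify (Generators Γ) := show Γ from objEquiv G (G ⧸ H) ↑(1 : G)
  -- instance search finds `IsConnected` only for the category structure of `ActionCategory`,
  -- not for the one coming from its groupoid structure
  have : RootedConnected base :=
    @generators_connected Γ _ (inferInstanceAs (IsConnected (ActionCategory G (G ⧸ H)))) _ _
  let T := geodesicSubtree base
  refine ⟨↥(T.underlyingArrows)ᶜ, Fintype.ofFinite _,
    (endBasis T).map (endMulEquivSubgroup H), ?_⟩
  have hcount := T.card_compl_underlyingArrows_add_card
  rw [card_generators, card_total_generators, ← Subgroup.index_eq_card] at hcount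
  zify at hcount
  linear_combination hcount
end
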